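/- (Theorem 3.8(b), Euclidean case.) Let p̄ ∈ F, let each ψ_u (u = 1,…,t) be directionally differentiable at p̄, and assume ψ_u is strictly pseudo-convex at p̄ for every active index u ∈ J(p̄). Suppose there exists an index c ∈ {1,…,l} such that the interval-valued objective φ_c, defined on the nonempty open convex set E, is weakly directionally differentiable at p̄ and satisfies (φ_c^L)'(p̄; p − p̄) < (φ_c^U)'(p̄; p − p̄) and (φ_c^L)'(p̄; p − p̄) > 0 for every p ∈ F with p ≠ p̄. If φ_c is C-convex at p̄ and for every p ∈ F there exist scalars μ_u ≥ 0 (possibly depending on p) such that (φ_c^C)'(p̄; p − p̄) + Σ_{u=1}^t μ_u ψ_u'(p̄; p − p̄) ≥ 0 and μ_u ψ_u(p̄) = 0 for all u, then p̄ is a strongly type-II Pareto optimal solution of (MIVOP2). -/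

import Mathlib

/-- One-sided directional derivative of `f` at `p` in direction `w`, with value `d`. -/
def HasDirDeriv {V : Type*} [NormedAddCommGroup V] [NormedSpace ℝ V]
    (f : V → ℝ) (p w : V) (d : ℝ) : Prop :=
  Filter.Tendsto (fun α : ℝ => (f (p + α • w) - f p) / α)
    (nhdsWithin 0 (Set.Ioi 0)) (nhds d)

/-- `f` is convex at the point `p` (relative to the convex set `E`). -/
def ConvexAtPt {V : Type*} [NormedAddCommGroup V] [NormedSpace ℝ V]
    (E : Set V) (f : V → ℝ) (p : V) : Prop :=
  ∀ q ∈ E, ∀ α : ℝ, 0 ≤ α → α ≤ 1 →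
    f ((1 - α) • p + α • q) ≤ (1 - α) * f p + α * f q

/-- `f` (with directional-derivative function `f'` at `pbar`) is pseudo-convex at `pbar`. -/
def PseudoConvexAt {V : Type*} [NormedAddCommGroup V] [NormedSpace ℝ V]
    (E : Set V) (f : V → ℝ) (f' : V → ℝ) (pbar : V) : Prop :=
  ∀ p ∈ E, f p < f pbar → f' (p - pbar) < 0

/-- `f` (with directional-derivative function `f'` at `pbar`) is strictly
pseudo-convex at `pbar`. -/
def StrictPseudoConvexAt {V : Type*} [NormedAddCommGroup V] [NormedSpace ℝ V]
    (E : Set V) (f : V → ℝ) (f' : V → ℝ) (pbar : V) : Prop :=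
  ∀ p ∈ E, p ≠ pbar → f p ≤ f pbar → f' (p - pbar) < 0

/-- `[aL, aU] ≤_LU [bL, bU]`. -/
def LUle (aL aU bL bU : ℝ) : Prop := aL ≤ bL ∧ aU ≤ bU

/-- `[aL, aU] <_LU [bL, bU]`. -/
def LUlt (aL aU bL bU : ℝ) : Prop := LUle aL aU bL bU ∧ (aL ≠ bL ∨ aU ≠ bU)

/-- `[aL, aU] ≤_CW [bL, bU]`. -/
def CWle (aL aU bL bU : ℝ) : Prop :=
  (aL + aU) / 2 ≤ (bL + bU) / 2 ∧ (aU - aL) / 2 ≤ (bU - bL) / 2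

/-- `[aL, aU] <_CW [bL, bU]`. -/
def CWlt (aL aU bL bU : ℝ) : Prop := CWle aL aU bL bU ∧ (aL ≠ bL ∨ aU ≠ bU)


private lemma dirDeriv_le_of_convexAtPt
    {V : Type*} [NormedAddCommGroup V] [NormedSpace ℝ V]
    {E : Set V} {f : V → ℝ} {pbar phat : V} {d : ℝ}
    (hconv : ConvexAtPt E f pbar) (hphat : phat ∈ E)
    (hd : HasDirDeriv f pbar (phat - pbar) d) :
    d ≤ f phat - f pbar := by
  refine le_of_tendsto hd ?_
  have h1 : ∀ᶠ α : ℝ in nhdsWithin 0 (Set.Ioi 0), α ∈ Set.Ioo (0:ℝ) 1 := by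
    have : Set.Ioo (0:ℝ) 1 ∈ nhdsWithin (0:ℝ) (Set.Ioi 0) :=
      Ioo_mem_nhdsGT_of_mem (by constructor <;> norm_num)
    exact this
  filter_upwards [h1] with α hα
  have hα0 : (0:ℝ) < α := hα.1
  have key := hconv phat hphat α hα0.le hα.2.le
  have heq : pbar + α • (phat - pbar) = (1 - α) • pbar + α • phat := by
    rw [smul_sub, sub_smul, one_smul]; abel
  rw [div_le_iff₀ hα0, heq]
  nlinarith [key]

/-- Theorem 3.8(b), Euclidean case: KKT sufficiency, via a single
C-convex objective `φ_c` with `(φ_c^L)' < (φ_c^U)'` and `(φ_c^L)' > 0` on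
feasible directions, for strongly type-II Pareto optimal solutions. -/
theorem kkt_strong_type_II_C_convex
    {V : Type*} [NormedAddCommGroup V] [NormedSpace ℝ V]
    (E : Set V) (hEne : E.Nonempty) (hEopen : IsOpen E) (hEconv : Convex ℝ E)
    (l t : ℕ) (φL φU : Fin l → V → ℝ) (ψ : Fin t → V → ℝ)
    (hφint : ∀ s, ∀ x ∈ E, φL s x ≤ φU s x)
    (pbar : V) (hpbarE : pbar ∈ E) (hpbarF : ∀ u, ψ u pbar ≤ 0)
    (ψ' : Fin t → V → ℝ)
    (hψd : ∀ u w, HasDirDeriv (ψ u) pbar w (ψ' u w))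
    -- strict pseudo-convexity of the active constraints at `pbar`
    (hψspc : ∀ u, ψ u pbar = 0 → StrictPseudoConvexAt E (ψ u) (ψ' u) pbar)
    (c : Fin l)
    (φcL' φcU' : V → ℝ)
    (hφLd : ∀ w, HasDirDeriv (φL c) pbar w (φcL' w))
    (hφUd : ∀ w, HasDirDeriv (φU c) pbar w (φcU' w))
    (hlt : ∀ p, p ∈ E → (∀ u, ψ u p ≤ 0) → p ≠ pbar →
      φcL' (p - pbar) < φcU' (p - pbar))
    (hpos : ∀ p, p ∈ E → (∀ u, ψ u p ≤ 0) → p ≠ pbar →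
      0 < φcL' (p - pbar))
    -- C-convexity of `φ_c` at `pbar`
    (hφCc : ConvexAtPt E (fun x => (φL c x + φU c x) / 2) pbar)
    -- multipliers, possibly depending on the feasible point `p`
    (hkkt : ∀ p, p ∈ E → (∀ u, ψ u p ≤ 0) →
      ∃ μ : Fin t → ℝ, (∀ u, 0 ≤ μ u) ∧
        0 ≤ (φcL' (p - pbar) + φcU' (p - pbar)) / 2
            + ∑ u, μ u * ψ' u (p - pbar) ∧
        ∀ u, μ u * ψ u pbar = 0) :
    ¬ ∃ phat, (phat ∈ E ∧ ∀ u, ψ u phat ≤ 0) ∧ phat ≠ pbar ∧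
      (∀ s, CWle (φL s phat) (φU s phat) (φL s pbar) (φU s pbar)) := by
  rintro ⟨phat, ⟨hpE, hpF⟩, hne, hCW⟩
  have hcw := (hCW c).1
  -- center directional derivative
  have hC : HasDirDeriv (fun x => (φL c x + φU c x) / 2) pbar (phat - pbar)
      ((φcL' (phat - pbar) + φcU' (phat - pbar)) / 2) := by
    exact (((hφLd (phat - pbar)).add (hφUd (phat - pbar))).div_const 2).congr
      (fun α => by simp only []; ring)
  have hle := dirDeriv_le_of_convexAtPt hφCc hpE hC
  have h1 := hpos phat hpE hpF hne
  have h2 := hlt phat hpE hpF hne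
  linarith
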